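/- arXiv:2404.13510 — 3 statements merged into one kernel-verified Lean document; each statement's English description precedes it below -/
import Mathlib

section
/- Let (X, ⪯) be a totally ordered set. Every chaotic map f : ℕ → X is binary. -/
/-- The 2-adic order of a rational number, with `ord2 0 = ⊤`. -/
noncomputable def ord2 (q : ℚ) : WithTop ℤ :=
  if q = 0 then ⊤ else (padicValRat 2 q : WithTop ℤ)

/-!
Along any arithmetic progression a chaotic map strictly zigzags. An induction on the odd step
`d` upgrades this to: either every even argument lies below every odd one, or the reverse, so
no monotone triple `a, b, c` has both `b - a` and `c - b` odd. If `b - a` and `c - b` have the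
same 2-adic order `k`, then `a, b, c` are congruent mod `2 ^ k` and their quotients by `2 ^ k`
form such a triple for the chaotic map `t ↦ f (a % 2 ^ k + 2 ^ k * t)`.
-/

-- `a + c = 2 * b` is `b - a = c - b` without truncated subtraction.
def Chaotic {X : Type*} [LinearOrder X] (g : ℕ → X) : Prop :=
  Function.Injective g ∧ ∀ a b c, g a < g b → g b < g c → a + c ≠ 2 * b

namespace Chaotic

variable {X : Type*} [LinearOrder X] {g : ℕ → X}

theorem dual (hg : Chaotic g) : Chaotic (OrderDual.toDual ∘ g) :=
  ⟨OrderDual.toDual.injective.comp hg.1, fun a b c hab hbc => by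
    simpa only [add_comm a c] using hg.2 c b a hbc hab⟩

theorem comp_affine (hg : Chaotic g) (r : ℕ) {D : ℕ} (hD : D ≠ 0) :
    Chaotic fun t => g (r + D * t) := by
  refine ⟨fun s t hst => ?_, fun a b c hab hbc habc => hg.2 _ _ _ hab hbc ?_⟩
  · exact Nat.eq_of_mul_eq_mul_left (Nat.pos_of_ne_zero hD) (Nat.add_left_cancel (hg.1 hst))
  · calc r + D * a + (r + D * c) = 2 * r + D * (a + c) := by ring
      _ = 2 * (r + D * b) := by rw [habc]; ring

theorem gt_of_lt {p t : ℕ} (hg : Chaotic g) (ht : t ≠ 0) (h : g p < g (p + t)) :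
    g (p + t + t) < g (p + t) :=
  (hg.1.ne (by omega : p + t + t ≠ p + t)).lt_or_gt.resolve_right
    fun h' => hg.2 p (p + t) (p + t + t) h h' (by omega)

theorem lt_of_gt {p t : ℕ} (hg : Chaotic g) (ht : t ≠ 0) (h : g (p + t) < g p) :
    g (p + t) < g (p + t + t) :=
  hg.dual.gt_of_lt ht h

theorem lt_add_two_mul_mul {p t : ℕ} (hg : Chaotic g) (ht : t ≠ 0) (h : g p < g (p + t))
    (k : ℕ) :
    g (p + 2 * k * t) < g (p + 2 * k * t + t) := by
  induction k with
  | zero => simpa using h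
  | succ k ih =>
    have h' := hg.lt_of_gt ht (hg.gt_of_lt ht ih)
    rwa [show p + 2 * (k + 1) * t = p + 2 * k * t + t + t by ring]

theorem gt_add_odd_mul {p t n : ℕ} (hg : Chaotic g) (ht : t ≠ 0) (h : g p < g (p + t))
    (hn : Odd n) : g (p + n * t + t) < g (p + n * t) := by
  obtain ⟨k, rfl⟩ := hn
  have h' := hg.gt_of_lt ht (hg.lt_add_two_mul_mul ht h k)
  rwa [show p + (2 * k + 1) * t = p + 2 * k * t + t by ring]

theorem lt_add_odd_of_even (hg : Chaotic g) (h01 : g 0 < g 1) {d : ℕ} (hd : Odd d) :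
    ∀ x, Even x → g x < g (x + d) := by
  induction d using Nat.strong_induction_on with | _ d ih =>
  intro x hx
  obtain rfl | hd3 : d = 1 ∨ 3 ≤ d := by obtain ⟨k, rfl⟩ := hd; omega
  · obtain ⟨j, rfl⟩ := hx
    have h := hg.lt_add_two_mul_mul one_ne_zero (p := 0) (by simpa using h01) j
    rwa [show 0 + 2 * j * 1 = j + j by ring] at h
  have descent : ∀ y, Even y → g (y + d) < g y → g (y + 2) < g y := fun y hy h =>
    calc g (y + 2) < g (y + 2 + (d - 2)) :=
          ih (d - 2) (by omega) (Nat.Odd.sub_even (by omega) hd even_two) (y + 2) (hy.add even_two)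
      _ = g (y + d) := by congr 1; omega
      _ < g y := h
  -- A descent by `d` at `x` recurs at `x + 2 * d`, so steps of `2` descend at both points,
  -- although they alternate along `x, x + 2, …` and `d` is odd.
  by_contra! hle
  have hd0 : d ≠ 0 := by omega
  have hlt : g (x + d) < g x := hle.lt_of_ne (hg.1.ne (by omega))
  have h2 : g (x + 2 * d + 2) < g (x + 2 * d) := by
    refine descent _ (by simpa [Nat.even_add] using hx) ?_
    rw [show x + 2 * d = x + d + d by ring]
    exact hg.gt_of_lt hd0 (hg.lt_of_gt hd0 hlt)
  have h3 := hg.dual.gt_add_odd_mul two_ne_zero (descent x hx hlt) hd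
  rw [mul_comm d 2] at h3
  exact h3.asymm h2

theorem even_lt_odd (hg : Chaotic g) (h01 : g 0 < g 1) {e o : ℕ} (he : Even e) (ho : Odd o) :
    g e < g o := by
  rcases (show e ≠ o by rintro rfl; exact Nat.not_even_iff_odd.mpr ho he).lt_or_gt with h | h
  · have h' := hg.lt_add_odd_of_even h01 (Nat.Odd.sub_even h.le ho he) e he
    rwa [Nat.add_sub_cancel' h.le] at h'
  · have hd := Nat.Even.sub_odd h.le he ho
    have hoe : o + (e - o) = e := Nat.add_sub_cancel' h.le
    have h1 := hg.lt_add_odd_of_even h01 hd e he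
    by_contra! hle
    have hlt : g o < g (o + (e - o)) := by rw [hoe]; exact hle.lt_of_ne (hg.1.ne h.ne)
    have h2 := hg.gt_of_lt hd.pos.ne' hlt
    rw [hoe] at h2
    exact h2.asymm h1

theorem even_lt_odd_or_odd_lt_even (hg : Chaotic g) :
    (∀ e o, Even e → Odd o → g e < g o) ∨ (∀ e o, Even e → Odd o → g o < g e) := by
  rcases (hg.1.ne zero_ne_one).lt_or_gt with h01 | h10
  · exact .inl fun e o he ho => hg.even_lt_odd h01 he ho
  · exact .inr fun e o he ho => hg.dual.even_lt_odd h10 he ho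

theorem not_odd_sub_of_lt_of_lt {a b c : ℕ} (hg : Chaotic g) (hab : g a < g b) (hbc : g b < g c)
    (hba : Odd ((b : ℤ) - a)) : ¬ Odd ((c : ℤ) - b) := by
  intro hcb
  simp only [Int.odd_sub, Int.odd_coe_nat, Int.even_coe_nat, ← Nat.not_even_iff_odd] at hba hcb
  rcases hg.even_lt_odd_or_odd_lt_even with H | H <;> by_cases hb : Even b
  · exact (H b a hb (Nat.not_even_iff_odd.mp (by tauto))).asymm hab
  · exact (H c b (by tauto) (Nat.not_even_iff_odd.mp hb)).asymm hbc
  · exact (H b c hb (Nat.not_even_iff_odd.mp (by tauto))).asymm hbc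
  · exact (H a b (by tauto) (Nat.not_even_iff_odd.mp hb)).asymm hab

theorem mul_two_dvd_sub_of_lt_of_lt {a b c D : ℕ} (hg : Chaotic g) (hab : g a < g b)
    (hbc : g b < g c) (hDba : (D : ℤ) ∣ b - a) (hDcb : (D : ℤ) ∣ c - b)
    (hba : ¬ (D : ℤ) * 2 ∣ b - a) : (D : ℤ) * 2 ∣ c - b := by
  have hD : D ≠ 0 := by
    rintro rfl
    rw [Nat.cast_zero, zero_dvd_iff, sub_eq_zero, Nat.cast_inj] at hDba
    exact hab.ne (congrArg g hDba.symm)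
  set r := a % D
  have hb : b % D = r := (Nat.modEq_iff_dvd.mpr hDba).symm
  have hc : c % D = r := hb ▸ (Nat.modEq_iff_dvd.mpr hDcb).symm
  have hdecomp : ∀ x, x % D = r → x = r + D * (x / D) := fun x hx =>
    hx ▸ (Nat.mod_add_div x D).symm
  have hodd : ∀ x y, x % D = r → y % D = r → ¬ (D : ℤ) * 2 ∣ y - x →
      Odd (((y / D : ℕ) : ℤ) - (x / D : ℕ)) := by
    intro x y hx hy hxy
    have hx' := congrArg (Nat.cast : ℕ → ℤ) (hdecomp x hx)
    have hy' := congrArg (Nat.cast : ℕ → ℤ) (hdecomp y hy)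
    push_cast at hx' hy'
    rw [← Int.not_even_iff_odd, even_iff_two_dvd]
    rintro ⟨m, hm⟩
    exact hxy ⟨m, by push_cast at hm; linear_combination hy' - hx' + D * hm⟩
  by_contra hcb
  refine (hg.comp_affine r hD).not_odd_sub_of_lt_of_lt ?_ ?_ (hodd a b rfl hb hba)
    (hodd b c hb hc hcb)
  · rwa [← hdecomp a rfl, ← hdecomp b hb]
  · rwa [← hdecomp b hb, ← hdecomp c hc]

theorem padicValInt_sub_ne {a b c : ℕ} (hg : Chaotic g) (hab : g a < g b) (hbc : g b < g c) :
    padicValInt 2 ((b : ℤ) - a) ≠ padicValInt 2 ((c : ℤ) - b) := by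
  intro hv
  set k := padicValInt 2 ((b : ℤ) - a)
  have hpow : ∀ x : ℤ, x ≠ 0 → padicValInt 2 x = k →
      ((2 ^ k : ℕ) : ℤ) ∣ x ∧ ¬ ((2 ^ k : ℕ) : ℤ) * 2 ∣ x := by
    intro x hx hxk
    refine ⟨?_, ?_⟩
    · simpa [hxk] using padicValInt_dvd (p := 2) x
    · rw [show ((2 ^ k : ℕ) : ℤ) * 2 = ((2 : ℕ) : ℤ) ^ (k + 1) by push_cast; ring,
        padicValInt_dvd_iff]
      omega
  have hba : (b : ℤ) - a ≠ 0 := by have := ne_of_apply_ne g hab.ne; omega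
  have hcb : (c : ℤ) - b ≠ 0 := by have := ne_of_apply_ne g hbc.ne; omega
  obtain ⟨hDba, hba2⟩ := hpow _ hba rfl
  obtain ⟨hDcb, hcb2⟩ := hpow _ hcb hv.symm
  exact hcb2 (hg.mul_two_dvd_sub_of_lt_of_lt hab hbc hDba hDcb hba2)

end Chaotic

theorem ord2_natCast_sub {a b : ℕ} (h : a ≠ b) :
    ord2 ((b : ℚ) - a) = ((padicValInt 2 ((b : ℤ) - a) : ℕ) : ℤ) := by
  rw [ord2, if_neg (sub_ne_zero.mpr (Nat.cast_injective.ne h.symm)),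
    show (b : ℚ) - a = (((b : ℤ) - a : ℤ) : ℚ) by push_cast; ring, padicValRat.of_int]

/-- Let (X, ⪯) be a totally ordered set. Every chaotic map f : ℕ → X is
binary. -/
theorem stmt_6 {X : Type*} [LinearOrder X] (f : ℕ → X)
    (hinj : Function.Injective f)
    (hch : ¬ ∃ a b c : ℕ, f a < f b ∧ f b < f c ∧ (b : ℚ) - (a : ℚ) = (c : ℚ) - (b : ℚ)) :
    Function.Injective f ∧
      ¬ ∃ a b c : ℕ, f a < f b ∧ f b < f c ∧
        ord2 ((b : ℚ) - (a : ℚ)) = ord2 ((c : ℚ) - (b : ℚ)) := by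
  have hf : Chaotic f := ⟨hinj, fun a b c hab hbc habc => hch ⟨a, b, c, hab, hbc, by
    have h : ((a + c : ℕ) : ℚ) = ((2 * b : ℕ) : ℚ) := congrArg Nat.cast habc
    push_cast at h
    linarith⟩⟩
  refine ⟨hinj, fun ⟨a, b, c, hab, hbc, hord⟩ => hf.padicValInt_sub_ne hab hbc ?_⟩
  rw [ord2_natCast_sub (ne_of_apply_ne f hab.ne), ord2_natCast_sub (ne_of_apply_ne f hbc.ne)]
    at hord
  exact_mod_cast hord
end

section
/- Let (X, ⪯) be a countably infinite totally ordered set without isolated points. Then there exists a binary bijection f : ℕ → X. -/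
/-!
Arrange `ℕ` as a binary tree in which the parent of `n > 0` is `n` with its leading binary
digit removed, and build `f` greedily so that no earlier value lies strictly between `f n` and
`f (parent n)`. Since `parent n ≡ n [MOD 2 ^ k]` whenever `2 ^ k ≤ n`, the order of `f x` and
`f y` for `x ≢ y [MOD 2 ^ k]` is that of `f (x % 2 ^ k)` and `f (y % 2 ^ k)`. If
`ord₂ (b - a) = ord₂ (c - b) = k - 1`, then `a ≡ c ≢ b [MOD 2 ^ k]`, so `f b` cannot lie between
`f a` and `f c`.

Without isolated points, a finite set always leaves a fresh point adjacent to any given point,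
so the construction never gets stuck. Choosing, among the admissible points, the one of least
index in a fixed enumeration of `X` makes `f` surjective, because every `x` is adjacent to
`f (parent n)` for infinitely many `n`.
-/

open Set Function Filter Topology

def parent (n : ℕ) : ℕ := n % 2 ^ Nat.log 2 n

lemma parent_lt {n : ℕ} (hn : 0 < n) : parent n < n :=
  (Nat.mod_lt _ (by positivity)).trans_le (Nat.pow_log_le_self 2 hn.ne')

lemma parent_modEq {n k : ℕ} (hk : 2 ^ k ≤ n) : parent n ≡ n [MOD 2 ^ k] :=
  Nat.mod_mod_of_dvd n (pow_dvd_pow 2 (Nat.le_log_of_pow_le one_lt_two hk))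

lemma parent_add_two_pow {m t : ℕ} (h : m < 2 ^ t) : parent (m + 2 ^ t) = m := by
  have : Nat.log 2 (m + 2 ^ t) = t :=
    Nat.log_eq_of_pow_le_of_lt_pow (by omega) (by rw [pow_succ]; omega)
  rw [parent, this, Nat.add_mod_right, Nat.mod_eq_of_lt h]

lemma two_pow_dvd_iff_le_padicValInt (k : ℕ) (z : ℤ) :
    (2 : ℤ) ^ k ∣ z ↔ z = 0 ∨ k ≤ padicValInt 2 z := by
  exact_mod_cast padicValInt_dvd_iff (p := 2) k z

lemma two_pow_succ_padicValInt_dvd_add {u v : ℤ} (hu : u ≠ 0) (hv : v ≠ 0)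
    (h : padicValInt 2 u = padicValInt 2 v) : 2 ^ (padicValInt 2 u + 1) ∣ u + v := by
  have hu2 := (two_pow_dvd_iff_le_padicValInt (padicValInt 2 u + 1) u).not.mpr (by omega)
  have hv2 := (two_pow_dvd_iff_le_padicValInt (padicValInt 2 u + 1) v).not.mpr (by omega)
  have hu1 := (two_pow_dvd_iff_le_padicValInt _ u).mpr (Or.inr le_rfl)
  have hv1 := (two_pow_dvd_iff_le_padicValInt _ v).mpr (Or.inr h.le)
  generalize padicValInt 2 u = k at *
  obtain ⟨u', rfl⟩ := hu1
  obtain ⟨v', rfl⟩ := hv1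
  have h2k : (2 : ℤ) ^ k ≠ 0 := by positivity
  rw [pow_succ, mul_dvd_mul_iff_left h2k] at hu2 hv2
  rw [pow_succ, ← mul_add, mul_dvd_mul_iff_left h2k]
  omega

lemma ord2_intCast {z : ℤ} (hz : z ≠ 0) : ord2 z = padicValInt 2 z := by
  rw [ord2, if_neg (by exact_mod_cast hz), padicValRat.of_int]
  rfl

lemma exists_modEq_of_ord2_eq {a b c : ℕ} (hab : a ≠ b) (hbc : b ≠ c)
    (h : ord2 ((b : ℚ) - a) = ord2 ((c : ℚ) - b)) :
    ∃ k, ¬ a ≡ b [MOD 2 ^ k] ∧ ¬ b ≡ c [MOD 2 ^ k] ∧ a ≡ c [MOD 2 ^ k] := by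
  have hba : (b : ℤ) - a ≠ 0 := sub_ne_zero.mpr (by exact_mod_cast hab.symm)
  have hcb : (c : ℤ) - b ≠ 0 := sub_ne_zero.mpr (by exact_mod_cast hbc.symm)
  have hval : padicValInt 2 (b - a) = padicValInt 2 (c - b) := by
    rw [show ((b : ℚ) - a) = ((b - a : ℤ) : ℚ) by push_cast; ring,
      show ((c : ℚ) - b) = ((c - b : ℤ) : ℚ) by push_cast; ring,
      ord2_intCast hba, ord2_intCast hcb] at h
    exact_mod_cast h
  refine ⟨padicValInt 2 (b - a) + 1, ?_, ?_, ?_⟩ <;> rw [Nat.modEq_iff_dvd] <;> push_cast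
  · rw [two_pow_dvd_iff_le_padicValInt]; omega
  · rw [two_pow_dvd_iff_le_padicValInt]; omega
  · rw [show (c : ℤ) - a = (b - a) + (c - b) by ring]
    exact two_pow_succ_padicValInt_dvd_add hba hcb hval

def parentSeq {X : Type*} (x₀ : X) (next : Set X → X → X) : ℕ → X
  | 0 => x₀
  | n + 1 => next (range fun m : Fin (n + 1) => parentSeq x₀ next m)
      (parentSeq x₀ next (parent (n + 1)))
decreasing_by
  · exact m.2
  · exact parent_lt n.succ_pos

lemma parentSeq_of_pos {X : Type*} (x₀ : X) (next : Set X → X → X) {n : ℕ} (hn : 0 < n) :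
    parentSeq x₀ next n =
      next (parentSeq x₀ next '' Iio n) (parentSeq x₀ next (parent n)) := by
  obtain ⟨n, rfl⟩ := Nat.exists_eq_add_one_of_ne_zero hn.ne'
  rw [parentSeq]
  congr
  ext
  simp [Fin.exists_iff]

section LinearOrder

variable {X : Type*} [LinearOrder X]

lemma lt_iff_lt_of_notMem_uIoo {p q s : X} (h : s ∉ uIoo p q) (hp : s ≠ p) (hq : s ≠ q) :
    (s < p ↔ s < q) ∧ (p < s ↔ q < s) := by
  simp only [uIoo_eq_union, mem_union, mem_Ioo, not_or, not_and, not_lt] at h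
  rcases hp.lt_or_gt with hp | hp <;> rcases hq.lt_or_gt with hq | hq <;> grind

lemma uIoo_subset_uIoo_of_mem {p q s : X} (h : s ∈ uIoo p q) : uIoo s q ⊆ uIoo p q := by
  intro t
  simp only [uIoo_eq_union, mem_union, mem_Ioo] at h ⊢
  grind

lemma mem_uIoo_of_notMem_uIoo {p q x y z : X} (hy : y ∈ uIoo q x)
    (hq : q ∉ uIoo p y) (hz : z ∈ uIoo p x) (hz' : z ∉ uIoo p y) : z ∈ uIoo q x := by
  simp only [uIoo_eq_union, mem_union, mem_Ioo] at *
  grind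

lemma Set.Finite.exists_mem_disjoint_uIoo {S : Set X} (hS : S.Finite) (hne : S.Nonempty)
    (x : X) : ∃ p ∈ S, Disjoint S (uIoo p x) := by
  obtain ⟨p, hpS, hmin⟩ := hS.exists_minimalFor (fun p => S ∩ uIoo p x) S hne
  refine ⟨p, hpS, disjoint_left.mpr fun s hs hsp => ?_⟩
  have := hmin hs (inter_subset_inter_right _ (uIoo_subset_uIoo_of_mem hsp)) ⟨hs, hsp⟩
  exact left_notMem_uIoo this.2

lemma Set.Finite.exists_notMem_disjoint_uIoo [TopologicalSpace X] [OrderTopology X]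
    (hiso : ∀ x : X, ¬ IsOpen ({x} : Set X)) {S : Set X} (hS : S.Finite) (p : X) :
    ∃ y ∉ S, Disjoint S (uIoo p y) := by
  have hC : ordConnectedComponent (S \ {p})ᶜ p ∈ 𝓝 p :=
    ordConnectedComponent_mem_nhds.mpr (hS.sdiff.isClosed.isOpen_compl.mem_nhds (by simp))
  obtain ⟨y, hyC, hyp⟩ : ∃ y ∈ ordConnectedComponent (S \ {p})ᶜ p, y ≠ p := by
    by_contra! h
    exact hiso p (isOpen_iff_mem_nhds.mpr fun q hq => by
      rw [mem_singleton_iff.mp hq]; exact mem_of_superset hC h)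
  rw [mem_ordConnectedComponent] at hyC
  exact ⟨y, fun hy => hyC right_mem_uIcc ⟨hy, hyp⟩, disjoint_left.mpr fun s hs hsy =>
    hyC (uIoo_subset_uIcc_self hsy) ⟨hs, fun h => left_notMem_uIoo (h ▸ hsy)⟩⟩

open Classical in
/-- The fallback `p` is never reached when `S` is finite, by
`Set.Finite.exists_notMem_disjoint_uIoo`. -/
noncomputable def greedyNext (e : ℕ → X) (S : Set X) (p : X) : X :=
  if h : ∃ i, e i ∉ S ∧ Disjoint S (uIoo p (e i)) then e (Nat.find h) else p

lemma greedyNext_spec [TopologicalSpace X] [OrderTopology X]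
    (hiso : ∀ x : X, ¬ IsOpen ({x} : Set X)) {e : ℕ → X} (he : Surjective e) {S : Set X}
    (hS : S.Finite) (p : X) :
    greedyNext e S p ∉ S ∧ Disjoint S (uIoo p (greedyNext e S p)) := by
  classical
  obtain ⟨y, hyS, hy⟩ := hS.exists_notMem_disjoint_uIoo hiso p
  obtain ⟨i, rfl⟩ := he y
  have h : ∃ i, e i ∉ S ∧ Disjoint S (uIoo p (e i)) := ⟨i, hyS, hy⟩
  rw [greedyNext, dif_pos h]
  exact Nat.find_spec h

lemma greedyNext_eq {e : ℕ → X} {S : Set X} {p : X} {i : ℕ} (hi : e i ∉ S)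
    (hlt : ∀ j < i, e j ∈ S) (hadj : Disjoint S (uIoo p (e i))) : greedyNext e S p = e i := by
  classical
  have h : ∃ i, e i ∉ S ∧ Disjoint S (uIoo p (e i)) := ⟨i, hi, hadj⟩
  rw [greedyNext, dif_pos h, (Nat.find_eq_iff h).mpr ⟨⟨hi, hadj⟩, fun j hj h' => h'.1 (hlt j hj)⟩]

variable {f : ℕ → X} (hadj : ∀ n, Disjoint (f '' Iio n) (uIoo (f (parent n)) (f n)))
include hadj

lemma lt_iff_lt_parent (hf : Injective f) {j n : ℕ} (hjn : j < n) (hj : j ≠ parent n) :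
    (f j < f n ↔ f j < f (parent n)) ∧ (f n < f j ↔ f (parent n) < f j) := by
  have hjn' := disjoint_left.mp (hadj n) (mem_image_of_mem f hjn)
  rw [uIoo_comm] at hjn'
  exact lt_iff_lt_of_notMem_uIoo hjn' (hf.ne hjn.ne) (hf.ne hj)

lemma lt_iff_lt_mod_two_pow (hf : Injective f) (k : ℕ) {x y : ℕ}
    (hxy : ¬ x ≡ y [MOD 2 ^ k]) : f x < f y ↔ f (x % 2 ^ k) < f (y % 2 ^ k) := by
  induction h : x + y using Nat.strong_induction_on generalizing x y with
  | _ s ih =>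
  -- Replace the larger index by its parent: same residue, and on the same side of the smaller.
  rcases lt_trichotomy x y with hlt | rfl | hlt
  · by_cases hy : y < 2 ^ k
    · rw [Nat.mod_eq_of_lt hy, Nat.mod_eq_of_lt (hlt.trans hy)]
    have hpy : parent y ≡ y [MOD 2 ^ k] := parent_modEq (not_lt.mp hy)
    have hpy_lt := parent_lt (hlt.trans_le' (Nat.zero_le x))
    rw [(lt_iff_lt_parent hadj hf hlt fun h => hxy (h ▸ hpy)).1,
      ih _ (by omega) (fun h => hxy (h.trans hpy)) rfl, hpy]
  · exact absurd rfl hxy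
  · by_cases hx : x < 2 ^ k
    · rw [Nat.mod_eq_of_lt hx, Nat.mod_eq_of_lt (hlt.trans hx)]
    have hpx : parent x ≡ x [MOD 2 ^ k] := parent_modEq (not_lt.mp hx)
    have hpx_lt := parent_lt (hlt.trans_le' (Nat.zero_le y))
    rw [(lt_iff_lt_parent hadj hf hlt fun h => hxy (h ▸ hpx).symm).2,
      ih _ (by omega) (fun h => hxy (hpx.symm.trans h)) rfl, hpx]

lemma not_exists_lt_lt_ord2_eq (hf : Injective f) :
    ¬ ∃ a b c : ℕ, f a < f b ∧ f b < f c ∧ ord2 ((b : ℚ) - a) = ord2 ((c : ℚ) - b) := by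
  rintro ⟨a, b, c, hab, hbc, h⟩
  obtain ⟨k, hab', hbc', hac⟩ :=
    exists_modEq_of_ord2_eq (ne_of_apply_ne f hab.ne) (ne_of_apply_ne f hbc.ne) h
  have h₁ := (lt_iff_lt_mod_two_pow hadj hf k hab').mp hab
  have h₂ := (lt_iff_lt_mod_two_pow hadj hf k hbc').mp hbc
  rw [← hac] at h₂
  exact lt_asymm h₁ h₂

lemma frequently_disjoint_uIoo_parent (x : X) :
    ∃ᶠ n in atTop, Disjoint (f '' Iio n) (uIoo (f (parent n)) x) := by
  rw [Filter.Frequently]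
  intro hblock
  -- If `f m` is the point nearest to `x` among the first `T` values, blocked steps never place
  -- anything between `f m` and `x`; but the step `m + 2 ^ T` is a child of `m`.
  obtain ⟨T, hT⟩ := eventually_atTop.mp (hblock.and (eventually_gt_atTop 0))
  obtain ⟨_, ⟨m, hmT, rfl⟩, hm⟩ := ((finite_Iio T).image f).exists_mem_disjoint_uIoo
    ⟨f 0, mem_image_of_mem f (hT T le_rfl).2⟩ x
  have hclear : ∀ j, f j ∉ uIoo (f m) x := by
    intro j
    induction j using Nat.strong_induction_on with
    | _ j ih =>
    intro hj
    by_cases hjT : j < T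
    · exact disjoint_left.mp hm (mem_image_of_mem f hjT) hj
    obtain ⟨hblocked, -⟩ := hT j (not_lt.mp hjT)
    obtain ⟨_, ⟨i, hij, rfl⟩, hix⟩ := not_disjoint_iff.mp hblocked
    refine ih i hij (mem_uIoo_of_notMem_uIoo hj ?_ hix ?_)
    · exact disjoint_left.mp (hadj j) (mem_image_of_mem f (hmT.trans_le (not_lt.mp hjT)))
    · exact disjoint_left.mp (hadj j) (mem_image_of_mem f hij)
  have hmT' : m < 2 ^ T := hmT.trans T.lt_two_pow_self
  have hblocked := (hT (m + 2 ^ T) (T.lt_two_pow_self.le.trans (Nat.le_add_left _ _))).1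
  rw [parent_add_two_pow hmT'] at hblocked
  exact hblocked (disjoint_left.mpr fun _ ⟨j, _, hj⟩ => hj ▸ hclear j)

lemma surjective_of_greedy {e : ℕ → X} (he : Surjective e)
    (hgreedy : ∀ n i, 0 < n → e i ∉ f '' Iio n → (∀ j < i, e j ∈ f '' Iio n) →
      Disjoint (f '' Iio n) (uIoo (f (parent n)) (e i)) → f n = e i) :
    Surjective f := by
  suffices ∀ i, e i ∈ range f from he.forall.mpr this
  intro i
  induction i using Nat.strong_induction_on with
  | _ i ih =>
  by_contra hi
  have hearly : ∀ᶠ n in atTop, ∀ j ∈ Iio i, e j ∈ f '' Iio n :=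
    (finite_Iio i).eventually_all.mpr fun j hj =>
      let ⟨w, hw⟩ := ih j hj
      (eventually_gt_atTop w).mono fun n hn => ⟨w, hn, hw⟩
  obtain ⟨n, hdisj, hn, hn0⟩ := ((frequently_disjoint_uIoo_parent hadj (e i)).and_eventually
    (hearly.and (eventually_gt_atTop 0))).exists
  exact hi ⟨n, hgreedy n i hn0 (fun h => hi (image_subset_range _ _ h)) hn hdisj⟩

end LinearOrder

/-- Let (X, ⪯) be a countably infinite totally ordered set without isolated
points. Then there exists a binary bijection f : ℕ → X. -/
theorem stmt_13 {X : Type*} [LinearOrder X] [TopologicalSpace X] [OrderTopology X]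
    [Countable X] [Infinite X] (hiso : ∀ x : X, ¬ IsOpen ({x} : Set X)) :
    ∃ f : ℕ → X, Function.Bijective f ∧
      ¬ ∃ a b c : ℕ, f a < f b ∧ f b < f c ∧
        ord2 ((b : ℚ) - (a : ℚ)) = ord2 ((c : ℚ) - (b : ℚ)) := by
  obtain ⟨e, he⟩ := exists_surjective_nat X
  set f := parentSeq (e 0) (greedyNext e)
  have hrec (n : ℕ) (hn : 0 < n) : f n = greedyNext e (f '' Iio n) (f (parent n)) :=
    parentSeq_of_pos _ _ hn
  have hspec (n : ℕ) (hn : 0 < n) :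
      f n ∉ f '' Iio n ∧ Disjoint (f '' Iio n) (uIoo (f (parent n)) (f n)) :=
    hrec n hn ▸ greedyNext_spec hiso he ((finite_Iio n).image f) _
  have hadj (n : ℕ) : Disjoint (f '' Iio n) (uIoo (f (parent n)) (f n)) := by
    rcases n.eq_zero_or_pos with rfl | hn
    · simp
    · exact (hspec n hn).2
  have hinj : Injective f := Injective.of_lt_imp_ne fun a b hab =>
    fun h => (hspec b (hab.trans_le' a.zero_le)).1 ⟨a, hab, h⟩
  refine ⟨f, ⟨hinj, surjective_of_greedy hadj he fun n i hn hi hlt hdisj => ?_⟩,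
    not_exists_lt_lt_ord2_eq hadj hinj⟩
  exact (hrec n hn).trans (greedyNext_eq hi hlt hdisj)
end

section
/- There exists a sequence r₀, r₁, … of nonzero rational numbers such that, setting S_n = {Σ_{i∈A} r_i : A ⊆ {0, …, n−1}} for each nonnegative integer n, the following hold: (1) the union of the sets S_n over all n is ℚ; (2) ord₂(a − b) < ord₂(r_n) whenever n is even and a, b ∈ S_n are distinct; (3) ord₂(a − b) > ord₂(r_n) whenever n is odd and a, b ∈ S_n. -/
open Finset

/-- `0, -1, 1, -2, 2, …` -/
def zigzag : ℕ ≃ ℤ := Equiv.intEquivNat.symm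

@[simp] lemma zigzag_two_mul (k : ℕ) : zigzag (2 * k) = k := by
  rw [zigzag, Equiv.symm_apply_eq]; rfl

@[simp] lemma zigzag_two_mul_add_one (k : ℕ) : zigzag (2 * k + 1) = -(k + 1) := by
  rw [zigzag, Equiv.symm_apply_eq]; rfl

lemma zigzag_le_self (n : ℕ) : zigzag n ≤ n := by
  obtain ⟨k, rfl | rfl⟩ := Nat.even_or_odd' n <;> simp <;> omega

lemma zigzag_lt_of_even {n i : ℕ} (hn : Even n) (hi : i < n) : zigzag i < zigzag n := by
  obtain ⟨k, rfl⟩ := hn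
  obtain ⟨j, rfl | rfl⟩ := Nat.even_or_odd' i <;> simp [← two_mul] <;> omega

lemma zigzag_lt_of_odd {n i : ℕ} (hn : Odd n) (hi : i < n) : zigzag n < zigzag i := by
  obtain ⟨k, rfl⟩ := hn
  obtain ⟨j, rfl | rfl⟩ := Nat.even_or_odd' i <;> simp <;> omega

noncomputable def ord2Valuation : AddValuation ℚ (WithTop ℤ) :=
  Padic.addValuation.comap (Rat.castHom ℚ_[2])

lemma ord2Valuation_apply (q : ℚ) : ord2Valuation q = ord2 q := by
  change Padic.addValuation (q : ℚ_[2]) = _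
  rcases eq_or_ne q 0 with rfl | hq
  · simp [ord2]
  · rw [Padic.addValuation.apply (Rat.cast_ne_zero.2 hq), Padic.valuation_ratCast, ord2,
      if_neg hq]

@[simp] lemma ord2_zero : ord2 0 = ⊤ := if_pos rfl

lemma ord2_of_ne_zero {q : ℚ} (hq : q ≠ 0) : ord2 q = padicValRat 2 q := if_neg hq

lemma ord2_two_zpow (m : ℤ) : ord2 (2 ^ m) = m := by
  rw [ord2_of_ne_zero (by positivity), padicValRat.zpow,
    show padicValRat 2 2 = 1 from padicValRat.self one_lt_two, mul_one]

lemma one_le_padicValRat_two_sub_one {q : ℚ} (hq0 : q ≠ 0) (hq : padicValRat 2 q = 0)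
    (hq1 : q ≠ 1) : 1 ≤ padicValRat 2 (q - 1) := by
  have hden_odd : ¬ 2 ∣ q.den := by
    intro h
    have hnum_odd : ¬ (2 : ℤ) ∣ q.num := fun h' =>
      Nat.not_coprime_of_dvd_of_dvd one_lt_two (Int.natCast_dvd.1 h') h q.reduced
    rw [padicValRat_def, padicValInt.eq_zero_of_not_dvd hnum_odd] at hq
    have := one_le_padicValNat_of_dvd q.den_ne_zero h
    omega
  have hnum_odd : ¬ (2 : ℤ) ∣ q.num := by
    intro h
    rw [padicValRat_def, padicValNat.eq_zero_of_not_dvd hden_odd] at hq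
    have := (padicValInt_dvd_iff (p := 2) 1 q.num).1 (by simpa using h)
    have := Rat.num_ne_zero.2 hq0
    omega
  have hsub : (2 : ℤ) ∣ q.num - q.den := by
    rw [← even_iff_two_dvd, Int.even_sub, even_iff_two_dvd, even_iff_two_dvd]
    exact iff_of_false hnum_odd (by exact_mod_cast hden_odd)
  have hsub0 : q.num - q.den ≠ 0 := by
    intro h
    apply hq1
    rw [← Rat.num_div_den q, show q.num = q.den by omega]
    simp
  have hq_sub : q - 1 = ((q.num - q.den : ℤ) : ℚ) / (q.den : ℕ) := by
    push_cast
    rw [sub_div, div_self (by positivity), Rat.num_div_den]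
  rw [hq_sub, padicValRat.div (by exact_mod_cast hsub0) (by positivity), padicValRat.of_int,
    padicValRat.of_nat, padicValNat.eq_zero_of_not_dvd hden_odd]
  have := (padicValInt_dvd_iff (p := 2) 1 _).1 (by simpa using hsub)
  omega

lemma ord2_lt_ord2_sub_of_eq {x y : ℚ} (hx : x ≠ 0) (h : ord2 x = ord2 y) :
    ord2 x < ord2 (x - y) := by
  rcases eq_or_ne x y with rfl | hxy
  · simp [ord2_of_ne_zero hx]
  have hy : y ≠ 0 := by
    rintro rfl
    simp [ord2_of_ne_zero hx] at h
  have hq : padicValRat 2 (x / y) = 0 := by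
    rw [ord2_of_ne_zero hx, ord2_of_ne_zero hy, WithTop.coe_eq_coe] at h
    rw [padicValRat.div hx hy, h, sub_self]
  have hq1 : x / y - 1 ≠ 0 := sub_ne_zero.2 (div_ne_one_of_ne hxy)
  rw [show x - y = y * (x / y - 1) by field_simp, ord2_of_ne_zero (mul_ne_zero hy hq1),
    padicValRat.mul hy hq1, h, ord2_of_ne_zero hy, WithTop.coe_lt_coe]
  have := one_le_padicValRat_two_sub_one (div_ne_zero hx hy) hq (div_ne_one_of_ne hxy)
  omega

def IsZigzag (r : ℕ → ℚ) : Prop := ∀ n, ord2 (r n) = zigzag n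

lemma isZigzag_two_zpow : IsZigzag fun n => 2 ^ zigzag n := fun n => ord2_two_zpow (zigzag n)

namespace IsZigzag

variable {r : ℕ → ℚ}

lemma ne_zero (hr : IsZigzag r) (n : ℕ) : r n ≠ 0 := by
  intro h
  simpa [h] using hr n

lemma update (hr : IsZigzag r) {n : ℕ} {x : ℚ} (hx : ord2 x = zigzag n) :
    IsZigzag (Function.update r n x) := by
  intro i
  rcases eq_or_ne i n with rfl | hi
  · rwa [Function.update_self]
  · rw [Function.update_of_ne hi, hr i]

lemma exists_ord2_sum_sub_sum (hr : IsZigzag r) {n : ℕ} {A B : Finset ℕ}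
    (hA : A ⊆ range n) (hB : B ⊆ range n) (hAB : ∑ i ∈ A, r i ≠ ∑ i ∈ B, r i) :
    ∃ i < n, ord2 (∑ i ∈ A, r i - ∑ i ∈ B, r i) = zigzag i := by
  classical
  set g : ℕ → ℚ := fun i => if i ∈ A then r i else -r i
  have hg : ∀ i, ord2Valuation (g i) = zigzag i := fun i => by
    by_cases hi : i ∈ A <;> simp [g, hi, ord2Valuation_apply, hr i]
  have hsum : ∑ i ∈ A, r i - ∑ i ∈ B, r i = ∑ i ∈ A \ B ∪ B \ A, g i := by
    rw [← sum_sdiff_sub_sum_sdiff, sum_union disjoint_sdiff_sdiff, sub_eq_add_neg,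
      ← sum_neg_distrib]
    congr 1 <;> refine sum_congr rfl fun i hi => ?_ <;> simp_all [g]
  have hne : (A \ B ∪ B \ A).Nonempty := by
    rw [nonempty_iff_ne_empty]
    rintro h
    rw [h, sum_empty, sub_eq_zero] at hsum
    exact hAB hsum
  obtain ⟨j, hj, hmin⟩ := exists_min_image _ zigzag hne
  refine ⟨j, ?_, ?_⟩
  · simp only [mem_union, mem_sdiff] at hj
    rcases hj with hj | hj
    exacts [mem_range.1 (hA hj.1), mem_range.1 (hB hj.1)]
  -- the term of least order is unique, so it alone decides the order of the sum
  rw [hsum, ← ord2Valuation_apply, ← add_sum_erase _ _ hj, ← hg j]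
  refine ord2Valuation.map_add_eq_of_lt_left (ord2Valuation.map_lt_sum (by simp [hg]) ?_)
  intro i hi
  rw [hg, hg, WithTop.coe_lt_coe]
  exact (hmin i (mem_of_mem_erase hi)).lt_of_ne (zigzag.injective.ne (ne_of_mem_erase hi).symm)

lemma exists_extension (hr : IsZigzag r) (n : ℕ) (x : ℚ) :
    ∃ r', IsZigzag r' ∧ (∀ i < n, r' i = r i) ∧
      ∃ A : Finset ℕ, x = ∑ i ∈ A, r' i ∧ ∀ i ∈ A, ord2 x ≤ zigzag i := by
  -- `F` bounds the number of subtractions: each raises the order by at least one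
  suffices ∀ F : ℕ, ∀ x : ℚ, (x ≠ 0 → (n : ℤ) ≤ padicValRat 2 x + F) →
      ∃ r', IsZigzag r' ∧ (∀ i < n, r' i = r i) ∧
        ∃ A : Finset ℕ, x = ∑ i ∈ A, r' i ∧ ∀ i ∈ A, ord2 x ≤ zigzag i from
    this (n - padicValRat 2 x).toNat x fun _ => by omega
  intro F
  induction F using Nat.strong_induction_on with | _ F ih => ?_
  intro x hfuel
  rcases eq_or_ne x 0 with rfl | hx
  · exact ⟨r, hr, fun _ _ => rfl, ∅, by simp, by simp⟩
  specialize hfuel hx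
  set i := zigzag.symm (padicValRat 2 x)
  have hvi : zigzag i = padicValRat 2 x := zigzag.apply_symm_apply _
  have hxi : ord2 x = zigzag i := by rw [ord2_of_ne_zero hx, hvi]
  rcases le_or_gt n i with hni | hin
  · refine ⟨Function.update r i x, hr.update hxi, fun j hj => ?_, {i}, by simp, by simp [hxi]⟩
    exact Function.update_of_ne (by omega) _ _
  have hx' : ord2 x < ord2 (x - r i) := ord2_lt_ord2_sub_of_eq hx (by rw [hxi, hr i])
  have hF : 0 < F := by
    have := zigzag_le_self i
    omega
  obtain ⟨r', hr', hagree, A, hA, hAval⟩ := ih (F - 1) (by omega) (x - r i) fun hx'0 => by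
    rw [ord2_of_ne_zero hx, ord2_of_ne_zero hx'0, WithTop.coe_lt_coe] at hx'
    omega
  have hiA : i ∉ A := fun hi => (hAval i hi).not_gt (hxi ▸ hx')
  refine ⟨r', hr', hagree, insert i A, ?_, ?_⟩
  · rw [sum_insert hiA, hagree i hin, ← hA]
    ring
  · intro j hj
    rcases mem_insert.1 hj with rfl | hj
    exacts [hxi.le, hx'.le.trans (hAval j hj)]

end IsZigzag

/-- A pair `(r, n)` stands for `r` with its first `n` terms frozen; `t` continues `s` on `x` if it
freezes more terms, keeps those of `s`, and writes `x` as a sum of frozen terms. -/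
def Continues (x : ℚ) (s t : (ℕ → ℚ) × ℕ) : Prop :=
  IsZigzag t.1 ∧ s.2 < t.2 ∧ (∀ i < s.2, t.1 i = s.1 i) ∧ ∃ A ⊆ range t.2, x = ∑ i ∈ A, t.1 i

lemma IsZigzag.exists_continues {s : (ℕ → ℚ) × ℕ} (hs : IsZigzag s.1) (x : ℚ) :
    ∃ t, Continues x s t := by
  obtain ⟨r', hr', hagree, A, hA, -⟩ := hs.exists_extension s.2 x
  obtain ⟨m, hm⟩ := A.exists_nat_subset_range
  refine ⟨(r', max m (s.2 + 1)), hr', by simp, hagree, A, ?_, hA⟩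
  exact hm.trans (range_subset_range.2 (le_max_left _ _))

noncomputable def zigzagStage : ℕ → (ℕ → ℚ) × ℕ
  | 0 => (fun n => 2 ^ zigzag n, 0)
  | k + 1 => Classical.epsilon (Continues (Denumerable.ofNat ℚ k) (zigzagStage k))

lemma isZigzag_zigzagStage : ∀ k, IsZigzag (zigzagStage k).1
  | 0 => isZigzag_two_zpow
  | k + 1 => (Classical.epsilon_spec ((isZigzag_zigzagStage k).exists_continues _)).1

lemma continues_zigzagStage (k : ℕ) :
    Continues (Denumerable.ofNat ℚ k) (zigzagStage k) (zigzagStage (k + 1)) :=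
  Classical.epsilon_spec ((isZigzag_zigzagStage k).exists_continues _)

lemma strictMono_zigzagStage_snd : StrictMono fun k => (zigzagStage k).2 :=
  strictMono_nat_of_lt_succ fun k => (continues_zigzagStage k).2.1

lemma zigzagStage_apply_of_le {i k l : ℕ} (hi : i < (zigzagStage k).2) (hkl : k ≤ l) :
    (zigzagStage l).1 i = (zigzagStage k).1 i := by
  induction hkl with
  | refl => rfl
  | step hkl ih =>
    rw [(continues_zigzagStage _).2.2.1 i
      (hi.trans_le (strictMono_zigzagStage_snd.monotone hkl)), ih]

noncomputable def zigzagLimit (i : ℕ) : ℚ := (zigzagStage (i + 1)).1 i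

lemma zigzagLimit_eq {i k : ℕ} (hi : i < (zigzagStage k).2) :
    zigzagLimit i = (zigzagStage k).1 i := by
  have hi' : i < (zigzagStage (i + 1)).2 := strictMono_zigzagStage_snd.le_apply
  rw [zigzagLimit, ← zigzagStage_apply_of_le hi' (le_max_left _ k),
    zigzagStage_apply_of_le hi (le_max_right _ _)]

lemma isZigzag_zigzagLimit : IsZigzag zigzagLimit := fun i => isZigzag_zigzagStage (i + 1) i

lemma exists_eq_sum_zigzagLimit (x : ℚ) :
    ∃ n, ∃ A ⊆ range n, x = ∑ i ∈ A, zigzagLimit i := by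
  obtain ⟨k, rfl⟩ := (Denumerable.eqv ℚ).symm.surjective x
  obtain ⟨A, hA, hx⟩ := (continues_zigzagStage k).2.2.2
  refine ⟨_, A, hA, hx.trans (sum_congr rfl fun i hi => ?_)⟩
  exact (zigzagLimit_eq (mem_range.1 (hA hi))).symm

/-- There exists a sequence r₀, r₁, … of nonzero rationals such that, with
Sₙ = {Σ_{i∈A} rᵢ : A ⊆ {0, …, n−1}}: (1) the union of the Sₙ is ℚ; (2) ord₂(a − b) <
ord₂(rₙ) whenever n is even and a, b ∈ Sₙ are distinct; (3) ord₂(a − b) > ord₂(rₙ)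
whenever n is odd and a, b ∈ Sₙ. -/
theorem stmt_17 :
    ∃ r : ℕ → ℚ, (∀ n : ℕ, r n ≠ 0) ∧
      (∀ x : ℚ, ∃ n : ℕ, ∃ A ⊆ Finset.range n, x = ∑ i ∈ A, r i) ∧
      (∀ n : ℕ, Even n → ∀ A ⊆ Finset.range n, ∀ B ⊆ Finset.range n,
        (∑ i ∈ A, r i) ≠ (∑ i ∈ B, r i) →
        ord2 ((∑ i ∈ A, r i) - ∑ i ∈ B, r i) < ord2 (r n)) ∧
      (∀ n : ℕ, Odd n → ∀ A ⊆ Finset.range n, ∀ B ⊆ Finset.range n,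
        ord2 (r n) < ord2 ((∑ i ∈ A, r i) - ∑ i ∈ B, r i)) := by
  have hr := isZigzag_zigzagLimit
  refine ⟨zigzagLimit, hr.ne_zero, exists_eq_sum_zigzagLimit, ?_, ?_⟩
  · intro n hn A hA B hB hAB
    obtain ⟨i, hin, hi⟩ := hr.exists_ord2_sum_sub_sum hA hB hAB
    rw [hi, hr n, WithTop.coe_lt_coe]
    exact zigzag_lt_of_even hn hin
  · intro n hn A hA B hB
    rcases eq_or_ne (∑ i ∈ A, zigzagLimit i) (∑ i ∈ B, zigzagLimit i) with hAB | hAB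
    · simp [hAB, hr n]
    obtain ⟨i, hin, hi⟩ := hr.exists_ord2_sum_sub_sum hA hB hAB
    rw [hi, hr n, WithTop.coe_lt_coe]
    exact zigzag_lt_of_odd hn hin
end
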